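/- arXiv:2506.11871 — 2 statements merged into one kernel-verified Lean document; each statement's English description precedes it below -/
import Mathlib

section
/- Let $h, V, W$ be $M \times M$ complex matrices with $V$ invertible, $\omega \in \mathbb{C}$, and let $T$ be the associated transfer matrix. Suppose a sequence of $M \times M$ matrices $(X_n)_{n \geq 0}$ satisfies $X_0 = 0$ and the Dyson recursion $V^{-1}(\omega - h) X_n - V^{-1} W X_{n-1} X_n = I$ for $n \geq 1$. Then for all $L \geq 1$: $\begin{pmatrix} I \\ X_L \end{pmatrix} = T^L \begin{pmatrix} I \\ 0 \end{pmatrix} X_1 X_2 \cdots X_L$. In particular, if $[T^L]_{11}$ is invertible, then $X_L = [T^L]_{21} [T^L]_{11}^{-1}$. -/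
open Matrix

/-- Stack two `M × M` matrices vertically into a `2M × M` matrix. -/
def stack {M : ℕ} (A B : Matrix (Fin M) (Fin M) ℂ) :
    Matrix (Fin M ⊕ Fin M) (Fin M) ℂ :=
  Matrix.of fun i j => Sum.elim (fun r => A r j) (fun r => B r j) i

/-!
Writing `T = [[A, -B], [1, 0]]`, the recursion `A Xₙ - B Xₙ₋₁ Xₙ = 1` says exactly that
`T (1; Xₙ₋₁) Xₙ = (1; Xₙ)`. Chaining these steps from `X₀ = 0` gives
`(1; X_L) = T^L (1; 0) X₁ ⋯ X_L`. Since `T^L (1; 0)` is the first block column of `T^L`, the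
top block reads `[T^L]₁₁ X₁ ⋯ X_L = 1`, so the product is `[T^L]₁₁⁻¹`, and the bottom block
gives `X_L = [T^L]₂₁ [T^L]₁₁⁻¹`.
-/

section Stack

variable {M : ℕ}

lemma stack_inj {A B C D : Matrix (Fin M) (Fin M) ℂ} :
    stack A B = stack C D ↔ A = C ∧ B = D := by
  refine ⟨fun hs => ⟨?_, ?_⟩, fun ⟨rfl, rfl⟩ => rfl⟩ <;> ext i j
  exacts [congrFun (congrFun hs (Sum.inl i)) j, congrFun (congrFun hs (Sum.inr i)) j]

lemma stack_mul (A B P : Matrix (Fin M) (Fin M) ℂ) :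
    stack A B * P = stack (A * P) (B * P) := by
  ext (i | i) j <;> simp [stack, mul_apply]

lemma fromBlocks_mul_stack (A B C D P Q : Matrix (Fin M) (Fin M) ℂ) :
    fromBlocks A B C D * stack P Q = stack (A * P + B * Q) (C * P + D * Q) := by
  ext (i | i) j <;> simp [stack, fromBlocks, mul_apply, Fintype.sum_sum_type]

-- Without `(M := M)` the product elaborates with the default `HMul` instance of `CStarMatrix`.
lemma mul_stack_one_zero (N : Matrix (Fin M ⊕ Fin M) (Fin M ⊕ Fin M) ℂ) :
    N * stack (M := M) 1 0 = stack N.toBlocks₁₁ N.toBlocks₂₁ := by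
  conv_lhs => rw [← fromBlocks_toBlocks N]
  simp [fromBlocks_mul_stack]

end Stack

section Transfer

variable {M : ℕ} (A B : Matrix (Fin M) (Fin M) ℂ)

def transfer : Matrix (Fin M ⊕ Fin M) (Fin M ⊕ Fin M) ℂ :=
  fromBlocks A (-B) 1 0

lemma transfer_mul_stack_one_mul {Y Z : Matrix (Fin M) (Fin M) ℂ} (hZ : A * Z - B * Y * Z = 1) :
    transfer A B * stack 1 Y * Z = stack 1 Z := by
  rw [transfer, fromBlocks_mul_stack, stack_mul]
  simp only [Matrix.mul_one, Matrix.one_mul, Matrix.zero_mul, add_zero, neg_mul,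
    ← sub_eq_add_neg, sub_mul, hZ]

lemma stack_one_eq_transfer_pow_mul {X : ℕ → Matrix (Fin M) (Fin M) ℂ} (hX0 : X 0 = 0)
    (hrec : ∀ n, 1 ≤ n → A * X n - B * X (n - 1) * X n = 1) (L : ℕ) :
    stack 1 (X L) =
      transfer A B ^ L * stack (M := M) 1 0 * ((List.range L).map fun i => X (i + 1)).prod := by
  induction L with
  | zero => simp [hX0]
  | succ n ih =>
    rw [List.range_succ, List.map_append, List.prod_append, pow_succ']
    simp only [List.map_cons, List.map_nil, List.prod_cons, List.prod_nil, Matrix.mul_one]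
    rw [← transfer_mul_stack_one_mul A B (hrec (n + 1) n.succ_pos), Nat.add_sub_cancel, ih]
    simp only [Matrix.mul_assoc]

end Transfer

lemma eq_toBlocks₂₁_mul_inv_of_stack_one_eq {M : ℕ}
    {N : Matrix (Fin M ⊕ Fin M) (Fin M ⊕ Fin M) ℂ} {Y P : Matrix (Fin M) (Fin M) ℂ}
    (h : stack 1 Y = N * stack (M := M) 1 0 * P) : Y = N.toBlocks₂₁ * N.toBlocks₁₁⁻¹ := by
  rw [mul_stack_one_zero, stack_mul] at h
  obtain ⟨htop, rfl⟩ := stack_inj.mp h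
  rw [inv_eq_right_inv htop.symm]

theorem stmt_7_general (M : ℕ) (h V W : Matrix (Fin M) (Fin M) ℂ) (ω : ℂ)
    (T : Matrix (Fin M ⊕ Fin M) (Fin M ⊕ Fin M) ℂ)
    (hT : T = Matrix.fromBlocks (V⁻¹ * (ω • (1 : Matrix (Fin M) (Fin M) ℂ) - h))
      (-(V⁻¹ * W)) 1 0)
    (X : ℕ → Matrix (Fin M) (Fin M) ℂ) (hX0 : X 0 = 0)
    (hrec : ∀ n : ℕ, 1 ≤ n →
      V⁻¹ * (ω • (1 : Matrix (Fin M) (Fin M) ℂ) - h) * X n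
        - V⁻¹ * W * X (n - 1) * X n = 1) :
    (∀ L : ℕ, 1 ≤ L →
      stack 1 (X L) =
        (T ^ L * stack 1 0 : Matrix (Fin M ⊕ Fin M) (Fin M) ℂ) * ((List.range L).map (fun i => X (i + 1))).prod) ∧
    (∀ L : ℕ, 1 ≤ L → IsUnit ((T ^ L).toBlocks₁₁) →
      X L = (T ^ L).toBlocks₂₁ * ((T ^ L).toBlocks₁₁)⁻¹) := by
  subst hT
  have product_formula := stack_one_eq_transfer_pow_mul _ _ hX0 hrec
  exact ⟨fun L _ => product_formula L,
    fun L _ _ => eq_toBlocks₂₁_mul_inv_of_stack_one_eq (product_formula L)⟩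

theorem stmt_7 (M : ℕ) (h V W : Matrix (Fin M) (Fin M) ℂ) [Invertible V] (ω : ℂ)
    (T : Matrix (Fin M ⊕ Fin M) (Fin M ⊕ Fin M) ℂ)
    (hT : T = Matrix.fromBlocks (V⁻¹ * (ω • (1 : Matrix (Fin M) (Fin M) ℂ) - h))
      (-(V⁻¹ * W)) 1 0)
    (X : ℕ → Matrix (Fin M) (Fin M) ℂ) (hX0 : X 0 = 0)
    (hrec : ∀ n : ℕ, 1 ≤ n →
      V⁻¹ * (ω • (1 : Matrix (Fin M) (Fin M) ℂ) - h) * X n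
        - V⁻¹ * W * X (n - 1) * X n = 1) :
    (∀ L : ℕ, 1 ≤ L →
      stack 1 (X L) =
        (T ^ L * stack 1 0 : Matrix (Fin M ⊕ Fin M) (Fin M) ℂ) * ((List.range L).map (fun i => X (i + 1))).prod) ∧
    (∀ L : ℕ, 1 ≤ L → IsUnit ((T ^ L).toBlocks₁₁) →
      X L = (T ^ L).toBlocks₂₁ * ((T ^ L).toBlocks₁₁)⁻¹) :=
  stmt_7_general M h V W ω T hT X hX0 hrec
end

section
/- Let $T$ be an invertible $2M \times 2M$ complex matrix diagonalized as $U^{-1} T U = \mathrm{diag}(B_1, B_2)$ where $B_1, B_2$ are $M \times M$ diagonal with diagonal entries of $B_1$ all strictly larger in absolute value than all diagonal entries of $B_2$. Write $U = \begin{pmatrix} U_{11} & U_{12} \\ U_{21} & U_{22} \end{pmatrix}$ in $M \times M$ blocks, and assume $U_{11}$ and $[(U^{-1})]_{11}$ are invertible. Then $B_2^L (U^{-1})_{21} (U^{-1})_{11}^{-1} B_1^{-L} \to 0$ as $L \to \infty$, and consequently $[T^L]_{21}\, ([T^L]_{11})^{-1} \to U_{21} U_{11}^{-1}$ as $L \to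 \infty$. -/
/-!
Conjugating by `U` gives `T ^ L = U * diag(B₁ ^ L, B₂ ^ L) * U⁻¹`. Factoring `B₁ ^ L * V₁₁`
(with `V = U⁻¹`) out of the first block column on the right turns the ratio of blocks into
`(U₂₁ + U₂₂ E_L) (U₁₁ + U₁₂ E_L)⁻¹` with `E_L = B₂ ^ L V₂₁ V₁₁⁻¹ B₁ ^ (-L)`. The `(i, j)` entry of
`E_L` is a constant times `(b₂ i / b₁ j) ^ L`, so `E_L → 0`, and the linear-fractional map
`E ↦ (U₂₁ + U₂₂ E) (U₁₁ + U₁₂ E)⁻¹` is continuous at `0` because `U₁₁` is invertible.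
-/
open Matrix Filter Topology

namespace Matrix

variable {m n R : Type*} [Fintype m] [Fintype n]

lemma inv_diagonal_of_ne_zero [DecidableEq n] [Field R] {c : n → R} (hc : ∀ i, c i ≠ 0) :
    (diagonal c)⁻¹ = diagonal c⁻¹ :=
  inv_eq_right_inv <| by
    rw [diagonal_mul_diagonal, ← diagonal_one]
    exact congrArg diagonal (funext fun i => mul_inv_cancel₀ (hc i))

lemma pow_eq_of_inv_mul_mul_eq [DecidableEq n] [CommRing R] {T U D : Matrix n n R} (hU : IsUnit U)
    (h : U⁻¹ * T * U = D) (L : ℕ) : T ^ L = U * D ^ L * U⁻¹ := by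
  have hdet : IsUnit U.det := (isUnit_iff_isUnit_det U).mp hU
  have hT : T = U * D * U⁻¹ := by
    simp [← h, ← mul_assoc, mul_nonsing_inv _ hdet, mul_nonsing_inv_cancel_right _ _ hdet]
  have := Units.conj_pow hU.unit D L
  simpa [coe_units_inv, ← hT] using this

lemma tendsto_diagonal_pow_mul_mul_diagonal_pow [DecidableEq m] [DecidableEq n]
    [NormedCommRing R] {a : m → R} {c : n → R} (h : ∀ i j, ‖a i * c j‖ < 1) (W : Matrix m n R) :
    Tendsto (fun L : ℕ => diagonal a ^ L * W * diagonal c ^ L) atTop (𝓝 0) := by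
  refine tendsto_pi_nhds.mpr fun i => tendsto_pi_nhds.mpr fun j => ?_
  have hentry : ∀ L : ℕ,
      (diagonal a ^ L * W * diagonal c ^ L) i j = (a i * c j) ^ L * W i j := by
    intro L
    simp only [diagonal_pow, mul_diagonal, diagonal_mul, Pi.pow_apply]
    ring
  simpa [hentry] using (tendsto_pow_atTop_nhds_zero_of_norm_lt_one (h i j)).mul_const (W i j)

section Blocks

variable [CommRing R] (X Y : Matrix (m ⊕ n) (m ⊕ n) R) (A : Matrix m m R) (B : Matrix n n R)

lemma toBlocks₁₁_mul_fromBlocks_mul :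
    (X * fromBlocks A 0 0 B * Y).toBlocks₁₁
      = X.toBlocks₁₁ * (A * Y.toBlocks₁₁) + X.toBlocks₁₂ * (B * Y.toBlocks₂₁) := by
  conv_lhs => rw [← fromBlocks_toBlocks X, ← fromBlocks_toBlocks Y]
  simp [fromBlocks_multiply, Matrix.mul_assoc]

lemma toBlocks₂₁_mul_fromBlocks_mul :
    (X * fromBlocks A 0 0 B * Y).toBlocks₂₁
      = X.toBlocks₂₁ * (A * Y.toBlocks₁₁) + X.toBlocks₂₂ * (B * Y.toBlocks₂₁) := by
  conv_lhs => rw [← fromBlocks_toBlocks X, ← fromBlocks_toBlocks Y]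
  simp [fromBlocks_multiply, Matrix.mul_assoc]

lemma toBlocks₂₁_mul_inv_toBlocks₁₁_mul_fromBlocks_mul [DecidableEq m]
    (hA : IsUnit (A * Y.toBlocks₁₁)) :
    let P := X * fromBlocks A 0 0 B * Y
    let E := B * Y.toBlocks₂₁ * (A * Y.toBlocks₁₁)⁻¹
    P.toBlocks₂₁ * P.toBlocks₁₁⁻¹
      = (X.toBlocks₂₁ + X.toBlocks₂₂ * E) * (X.toBlocks₁₁ + X.toBlocks₁₂ * E)⁻¹ := by
  intro P E
  have hdet : IsUnit (A * Y.toBlocks₁₁).det := (isUnit_iff_isUnit_det _).mp hA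
  have hE : E * (A * Y.toBlocks₁₁) = B * Y.toBlocks₂₁ := nonsing_inv_mul_cancel_right _ _ hdet
  have hP₂₁ : P.toBlocks₂₁ = (X.toBlocks₂₁ + X.toBlocks₂₂ * E) * (A * Y.toBlocks₁₁) := by
    rw [toBlocks₂₁_mul_fromBlocks_mul, Matrix.add_mul, Matrix.mul_assoc, hE]
  have hP₁₁ : P.toBlocks₁₁ = (X.toBlocks₁₁ + X.toBlocks₁₂ * E) * (A * Y.toBlocks₁₁) := by
    rw [toBlocks₁₁_mul_fromBlocks_mul, Matrix.add_mul, Matrix.mul_assoc, hE]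
  rw [hP₂₁, hP₁₁, Matrix.mul_inv_rev, ← Matrix.mul_assoc, mul_nonsing_inv_cancel_right _ _ hdet]

end Blocks

lemma continuousAt_add_mul_mul_inv_add_mul [DecidableEq m] [NormedField R] (P : Matrix n m R)
    (Q : Matrix n n R) {S : Matrix m m R} (hS : IsUnit S) (V : Matrix m n R) :
    ContinuousAt (fun E : Matrix n m R => (P + Q * E) * (S + V * E)⁻¹) 0 := by
  have hdet : S.det ≠ 0 := ((isUnit_iff_isUnit_det S).mp hS).ne_zero
  have hinv : ContinuousAt Inv.inv S :=
    continuousAt_matrix_inv _ (by simpa [Ring.inverse_eq_inv'] using continuousAt_inv₀ hdet)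
  have hnum : Continuous fun E : Matrix n m R => P + Q * E := by fun_prop
  have hden : Continuous fun E : Matrix n m R => S + V * E := by fun_prop
  have hmul : Continuous fun p : Matrix n m R × Matrix m m R => p.1 * p.2 :=
    continuous_fst.matrix_mul continuous_snd
  have hinv' : ContinuousAt (fun E : Matrix n m R => (S + V * E)⁻¹) 0 :=
    hinv.comp_of_eq hden.continuousAt (by simp)
  exact ContinuousAt.comp (f := fun E => (P + Q * E, (S + V * E)⁻¹)) hmul.continuousAt
    (hnum.continuousAt.prodMk hinv')

end Matrix

theorem stmt_17_general (M : ℕ) (T U : Matrix (Fin M ⊕ Fin M) (Fin M ⊕ Fin M) ℂ)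
    (hU : IsUnit U)
    (b1 b2 : Fin M → ℂ)
    (hdiag : U⁻¹ * T * U =
      Matrix.fromBlocks (Matrix.diagonal b1) 0 0 (Matrix.diagonal b2))
    (habs : ∀ i j : Fin M, ‖b2 j‖ < ‖b1 i‖)
    (hU11 : IsUnit U.toBlocks₁₁) (hUinv11 : IsUnit (U⁻¹).toBlocks₁₁) :
    Tendsto (fun L : ℕ =>
        (Matrix.diagonal b2) ^ L * (U⁻¹).toBlocks₂₁ * ((U⁻¹).toBlocks₁₁)⁻¹ *
          ((Matrix.diagonal b1)⁻¹) ^ L) atTop (𝓝 0) ∧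
    Tendsto (fun L : ℕ => (T ^ L).toBlocks₂₁ * ((T ^ L).toBlocks₁₁)⁻¹) atTop
      (𝓝 (U.toBlocks₂₁ * (U.toBlocks₁₁)⁻¹)) := by
  have hb1 : ∀ i, b1 i ≠ 0 := fun i => norm_pos_iff.mp ((norm_nonneg _).trans_lt (habs i i))
  have hE : Tendsto (fun L : ℕ =>
      diagonal b2 ^ L * (U⁻¹).toBlocks₂₁ * ((U⁻¹).toBlocks₁₁)⁻¹ * (diagonal b1)⁻¹ ^ L)
      atTop (𝓝 0) := by
    have hlt : ∀ i j, ‖b2 i * (b1⁻¹) j‖ < 1 := fun i j => by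
      rw [norm_mul, Pi.inv_apply, norm_inv, ← div_eq_mul_inv]
      exact (div_lt_one (norm_pos_iff.mpr (hb1 j))).mpr (habs j i)
    simpa [inv_diagonal_of_ne_zero hb1, mul_assoc] using
      tendsto_diagonal_pow_mul_mul_diagonal_pow hlt ((U⁻¹).toBlocks₂₁ * ((U⁻¹).toBlocks₁₁)⁻¹)
  refine ⟨hE, ?_⟩
  have hunit : ∀ L : ℕ, IsUnit (diagonal b1 ^ L * (U⁻¹).toBlocks₁₁) := fun L =>
    ((isUnit_diagonal.mpr (Pi.isUnit_iff.mpr fun i => (hb1 i).isUnit)).pow L).mul hUinv11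
  have hblock : ∀ L : ℕ, (T ^ L).toBlocks₂₁ * ((T ^ L).toBlocks₁₁)⁻¹ =
      (fun E => (U.toBlocks₂₁ + U.toBlocks₂₂ * E) * (U.toBlocks₁₁ + U.toBlocks₁₂ * E)⁻¹)
        (diagonal b2 ^ L * (U⁻¹).toBlocks₂₁ * ((U⁻¹).toBlocks₁₁)⁻¹ * (diagonal b1)⁻¹ ^ L) := by
    intro L
    rw [pow_eq_of_inv_mul_mul_eq hU hdiag, fromBlocks_diagonal_pow,
      toBlocks₂₁_mul_inv_toBlocks₁₁_mul_fromBlocks_mul _ _ _ _ (hunit L), Matrix.mul_inv_rev,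
      inv_pow']
    simp only [mul_assoc]
  simpa using ((continuousAt_add_mul_mul_inv_add_mul _ _ hU11 _).tendsto.comp hE).congr
    fun L => (hblock L).symm

theorem stmt_17 (M : ℕ) (T U : Matrix (Fin M ⊕ Fin M) (Fin M ⊕ Fin M) ℂ)
    (hT : IsUnit T) (hU : IsUnit U)
    (b1 b2 : Fin M → ℂ)
    (hdiag : U⁻¹ * T * U =
      Matrix.fromBlocks (Matrix.diagonal b1) 0 0 (Matrix.diagonal b2))
    (habs : ∀ i j : Fin M, ‖b2 j‖ < ‖b1 i‖)
    (hU11 : IsUnit U.toBlocks₁₁) (hUinv11 : IsUnit (U⁻¹).toBlocks₁₁) :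
    Tendsto (fun L : ℕ =>
        (Matrix.diagonal b2) ^ L * (U⁻¹).toBlocks₂₁ * ((U⁻¹).toBlocks₁₁)⁻¹ *
          ((Matrix.diagonal b1)⁻¹) ^ L) atTop (𝓝 0) ∧
    Tendsto (fun L : ℕ => (T ^ L).toBlocks₂₁ * ((T ^ L).toBlocks₁₁)⁻¹) atTop
      (𝓝 (U.toBlocks₂₁ * (U.toBlocks₁₁)⁻¹)) :=
  stmt_17_general M T U hU b1 b2 hdiag habs hU11 hUinv11
end
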